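/- Let (Ω, 𝔉, P) be a probability space, (τ_N) positive with τ_N → 0, η̃ > 0, q⁻, q⁺ : S → ℝ bounded, C⁻, C⁺ sets of functions S → ℝ with C = C⁻ ∪ C⁺, and μ̂_N : Ω → (S → ℝ) arbitrary maps; write G_N(ω, s) = (μ̂_N(ω, s) − μ(s))/(τ_N·σ(s)). Assume: (i) for every ε > 0 there is M > 0 with liminf_N P_*({ω : −q⁻(s) − M ≤ G_N(ω, s) ≤ q⁺(s) + M for all s ∈ μ⁻¹_{C_η̃}}) ≥ 1 − ε; (ii) there exist K > 0 and maps Z_N : Ω → (S → ℝ) such that for every ω, every N, every c ∈ C and every s ∉ μ⁻¹_{C_η̃}: (μ̂_N(ω, s) − c(s))·sgn(μ(s) − c(s)) ≥ σ(s)·(K + Z_N(ω, s)), and for every ε > 0 there is M > 0 with liminf_N P_*({ω : Z_N(ω, s)/τ_N ≥ −M for all s ∈ S}) ≥ 1 − ε. Assume further that there exists η > 0 with μ⁻¹_{C⁻₊η} = ∅ and μ⁻¹_{C⁺₋η} = ∅. Then lim_N P_*({ω : for all c⁻ ∈ Γ(C⁻) and c⁺ ∈ Γ(C⁺), {s : μ̂_N(ω,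 s) < c⁻(s) − q⁻(s)·τ_N·σ(s)} ⊆ {s : μ(s) < c⁻(s)} and {s : μ̂_N(ω, s) > c⁺(s) + q⁺(s)·τ_N·σ(s)} ⊆ {s : μ(s) > c⁺(s)}}) = 1. (Paper: SCoPE Set Metatheorem (Theorem thm:SCoPESMetatheorem), claim 2: when the one-sided thickened preimages are empty the SCoPE inclusions hold with inner probability tending to one.) -/
import Mathlib


open MeasureTheory Filter

/-- Outer probability of an arbitrary (not necessarily measurable) set. -/
noncomputable def outerProb {Ω : Type*} [MeasurableSpace Ω] (P : Measure Ω) (A : Set Ω) : ℝ :=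
  (P A).toReal

/-- Inner probability of an arbitrary (not necessarily measurable) set. -/
noncomputable def innerProb {Ω : Type*} [MeasurableSpace Ω] (P : Measure Ω) (A : Set Ω) : ℝ :=
  1 - (P Aᶜ).toReal

lemma innerProb_mono' {Ω : Type*} [MeasurableSpace Ω] (P : Measure Ω) [IsProbabilityMeasure P]
    {A B : Set Ω} (h : A ⊆ B) : innerProb P A ≤ innerProb P B := by
  unfold innerProb
  have h1 : P Bᶜ ≤ P Aᶜ := measure_mono (Set.compl_subset_compl.mpr h)
  have := ENNReal.toReal_mono (measure_ne_top P _) h1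
  linarith

lemma innerProb_le_one' {Ω : Type*} [MeasurableSpace Ω] (P : Measure Ω) (A : Set Ω) :
    innerProb P A ≤ 1 := by
  unfold innerProb
  have : (0:ℝ) ≤ (P Aᶜ).toReal := ENNReal.toReal_nonneg
  linarith

lemma innerProb_nonneg' {Ω : Type*} [MeasurableSpace Ω] (P : Measure Ω) [IsProbabilityMeasure P]
    (A : Set Ω) : 0 ≤ innerProb P A := by
  unfold innerProb
  have h1 : P Aᶜ ≤ 1 := prob_le_one
  have := ENNReal.toReal_mono (by simp) h1
  simp at this
  linarith

lemma innerProb_inter' {Ω : Type*} [MeasurableSpace Ω] (P : Measure Ω) [IsProbabilityMeasure P]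
    (A B : Set Ω) : innerProb P A + innerProb P B - 1 ≤ innerProb P (A ∩ B) := by
  unfold innerProb
  have h1 : P (A ∩ B)ᶜ ≤ P Aᶜ + P Bᶜ := by
    rw [Set.compl_inter]; exact measure_union_le _ _
  have h2 := ENNReal.toReal_mono
    (by exact ENNReal.add_ne_top.mpr ⟨measure_ne_top P _, measure_ne_top P _⟩) h1
  rw [ENNReal.toReal_add (measure_ne_top P _) (measure_ne_top P _)] at h2
  linarith

set_option maxHeartbeats 1000000

/-- SCoPE Set Metatheorem (Theorem thm:SCoPESMetatheorem), claim 2: when the one-sided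
thickened preimages are empty, the SCoPE inclusions hold with inner probability
tending to one. -/
theorem scope_metatheorem_empty_preimages
    {Ω : Type*} [MeasurableSpace Ω] (P : Measure Ω) [IsProbabilityMeasure P]
    {S : Type*} [MetricSpace S]
    (μ σ : S → ℝ) (o O : ℝ)
    (ho : 0 < o) (hσo : ∀ s, o ≤ σ s) (hσO : ∀ s, σ s ≤ O)
    (hμbd : ∃ M, ∀ s, |μ s| ≤ M)
    (τ : ℕ → ℝ) (hτpos : ∀ N, 0 < τ N) (hτ0 : Tendsto τ atTop (nhds 0))
    (ηt : ℝ) (hηt : 0 < ηt)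
    (qm qp : S → ℝ) (hqm : ∃ M, ∀ s, |qm s| ≤ M) (hqp : ∃ M, ∀ s, |qp s| ≤ M)
    (Cm Cp : Set (S → ℝ))
    (μhat : ℕ → Ω → S → ℝ)
    (htight : ∀ ε > (0 : ℝ), ∃ M > (0 : ℝ), (1 : ℝ) - ε ≤
      liminf (fun N => innerProb P {ω : Ω |
        ∀ s, (∃ c ∈ Cm ∪ Cp, |μ s - c s| ≤ ηt) →
          (-(qm s) - M ≤ (μhat N ω s - μ s) / (τ N * σ s) ∧
            (μhat N ω s - μ s) / (τ N * σ s) ≤ qp s + M)}) atTop)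
    (hfar : ∃ K > (0 : ℝ), ∃ Z : ℕ → Ω → S → ℝ,
      (∀ ω N, ∀ c ∈ Cm ∪ Cp, ∀ s, ¬(∃ c' ∈ Cm ∪ Cp, |μ s - c' s| ≤ ηt) →
        (μhat N ω s - c s) * Real.sign (μ s - c s) ≥ σ s * (K + Z N ω s)) ∧
      (∀ ε > (0 : ℝ), ∃ M > (0 : ℝ), (1 : ℝ) - ε ≤
        liminf (fun N => innerProb P {ω : Ω | ∀ s, Z N ω s / τ N ≥ -M}) atTop))
    (hempty : ∃ ηe > (0 : ℝ),
      {s : S | ∃ c ∈ Cm, 0 ≤ μ s - c s ∧ μ s - c s ≤ ηe} = ∅ ∧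
      {s : S | ∃ c ∈ Cp, 0 ≤ c s - μ s ∧ c s - μ s ≤ ηe} = ∅) :
    Tendsto (fun N => innerProb P {ω : Ω | ∀ cm cp : S → ℝ,
        (∀ s, ∃ c ∈ Cm, cm s = c s) → (∀ s, ∃ c ∈ Cp, cp s = c s) →
        {s | μhat N ω s < cm s - qm s * τ N * σ s} ⊆ {s | μ s < cm s} ∧
        {s | μhat N ω s > cp s + qp s * τ N * σ s} ⊆ {s | μ s > cp s}})
      atTop (nhds 1) := by
  obtain ⟨K, hK, Z, hfar1, hfar2⟩ := hfar
  obtain ⟨ηe, hηe, hem, hep⟩ := hempty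
  obtain ⟨Mqm0, hMqm⟩ := hqm
  obtain ⟨Mqp0, hMqp⟩ := hqp
  set Mqm := max Mqm0 0 with hMqmdef
  set Mqp := max Mqp0 0 with hMqpdef
  have hMqm' : ∀ s, |qm s| ≤ Mqm := fun s => (hMqm s).trans (le_max_left _ _)
  have hMqp' : ∀ s, |qp s| ≤ Mqp := fun s => (hMqp s).trans (le_max_left _ _)
  have hMqmpos : 0 ≤ Mqm := le_max_right _ _
  have hMqppos : 0 ≤ Mqp := le_max_right _ _
  set E : ℕ → Set Ω := fun N => {ω : Ω | ∀ cm cp : S → ℝ,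
        (∀ s, ∃ c ∈ Cm, cm s = c s) → (∀ s, ∃ c ∈ Cp, cp s = c s) →
        {s | μhat N ω s < cm s - qm s * τ N * σ s} ⊆ {s | μ s < cm s} ∧
        {s | μhat N ω s > cp s + qp s * τ N * σ s} ⊆ {s | μ s > cp s}} with hE
  -- main claim: eventually the inner probability is at least 1 - ε
  have claim : ∀ ε > (0:ℝ), ∀ᶠ N in atTop, 1 - ε ≤ innerProb P (E N) := by
    intro ε hε
    obtain ⟨M1, hM1, hliminf1⟩ := htight (ε/4) (by linarith)
    obtain ⟨M2, hM2, hliminf2⟩ := hfar2 (ε/4) (by linarith)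
    set T : ℕ → Set Ω := fun N => {ω : Ω |
        ∀ s, (∃ c ∈ Cm ∪ Cp, |μ s - c s| ≤ ηt) →
          (-(qm s) - M1 ≤ (μhat N ω s - μ s) / (τ N * σ s) ∧
            (μhat N ω s - μ s) / (τ N * σ s) ≤ qp s + M1)} with hT
    set ZE : ℕ → Set Ω := fun N => {ω : Ω | ∀ s, Z N ω s / τ N ≥ -M2} with hZE
    -- eventual smallness of τ
    set A1 : ℝ := M1 * max O 1 with hA1
    have hA1pos : 0 < A1 := mul_pos hM1 (lt_of_lt_of_le one_pos (le_max_right _ _))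
    set A2 : ℝ := M2 + Mqm + Mqp + 1 with hA2def
    have hA2pos : 0 < A2 := by positivity
    set δ : ℝ := min (ηe / A1) (K / A2) with hδdef
    have hδpos : 0 < δ := lt_min (div_pos hηe hA1pos) (div_pos hK hA2pos)
    have hev1 : ∀ᶠ N in atTop, τ N < δ := hτ0.eventually (eventually_lt_nhds hδpos)
    -- deterministic inclusion
    have hincl : ∀ N, τ N < δ → T N ∩ ZE N ⊆ E N := by
      intro N hτN ω hω
      obtain ⟨hωT, hωZ⟩ := hω
      have hτδ1 : τ N * A1 ≤ ηe := by
        have h := (le_div_iff₀ hA1pos).mp (hτN.trans_le (min_le_left _ _)).le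
        linarith
      have hτδ2 : τ N * A2 ≤ K := by
        have h := (le_div_iff₀ hA2pos).mp (hτN.trans_le (min_le_right _ _)).le
        linarith
      intro cm cp hcm hcp
      constructor
      · -- lower SCoPE inclusion
        intro s hs
        simp only [Set.mem_setOf_eq] at hs ⊢
        by_contra hcon
        push_neg at hcon
        obtain ⟨c, hcCm, hcs⟩ := hcm s
        have hcle : c s ≤ μ s := hcs ▸ hcon
        have hηlt : ηe < μ s - c s := by
          by_contra hle
          push_neg at hle
          have : s ∈ {s : S | ∃ c ∈ Cm, 0 ≤ μ s - c s ∧ μ s - c s ≤ ηe} :=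
            ⟨c, hcCm, by linarith, hle⟩
          rw [hem] at this; exact this
        have hσs : o ≤ σ s := hσo s
        have hτσ : 0 < τ N * σ s := mul_pos (hτpos N) (ho.trans_le hσs)
        by_cases hnear : ∃ c' ∈ Cm ∪ Cp, |μ s - c' s| ≤ ηt
        · have hG := (hωT s hnear).1
          have hG' : (-(qm s) - M1) * (τ N * σ s) ≤ μhat N ω s - μ s :=
            (le_div_iff₀ hτσ).mp hG
          have hM1b : M1 * (τ N * σ s) ≤ ηe := by
            have h1 : σ s ≤ max O 1 := (hσO s).trans (le_max_left _ _)
            have h2 : M1 * (τ N * σ s) ≤ M1 * (τ N * max O 1) := by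
              have := mul_le_mul_of_nonneg_left h1 (hτpos N).le
              nlinarith
            calc M1 * (τ N * σ s) ≤ M1 * (τ N * max O 1) := h2
              _ = τ N * A1 := by ring
              _ ≤ ηe := hτδ1
          rw [hcs] at hs
          nlinarith
        · have hfs := hfar1 ω N c (Set.mem_union_left _ hcCm) s hnear
          have hsgn : Real.sign (μ s - c s) = 1 := Real.sign_of_pos (by linarith)
          rw [hsgn, mul_one] at hfs
          have hZs : -M2 * τ N ≤ Z N ω s := (le_div_iff₀ (hτpos N)).mp (hωZ s)
          have hq : -(Mqm) ≤ qm s := neg_le_of_abs_le (hMqm' s)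
          -- μhat - c ≥ σ (K + Z) ≥ σ (K - M2 τ) ≥ -qm τ σ
          rw [hcs] at hs
          have hKb : (M2 + Mqm) * τ N ≤ K := by
            nlinarith [hτδ2, (hτpos N).le, hMqppos]
          have hσpos : 0 < σ s := ho.trans_le hσs
          have step1 : σ s * (K - M2 * τ N) ≤ σ s * (K + Z N ω s) := by nlinarith
          have step2 : σ s * (K - M2 * τ N) ≤ μhat N ω s - c s := le_trans step1 hfs
          have step3 : μhat N ω s - c s < σ s * (Mqm * τ N) := by nlinarith [mul_pos (hτpos N) hσpos]
          have step4 : K - M2 * τ N < Mqm * τ N := (mul_lt_mul_iff_right₀ hσpos).mp (lt_of_le_of_lt step2 step3)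
          linarith
      · -- upper SCoPE inclusion
        intro s hs
        simp only [Set.mem_setOf_eq] at hs ⊢
        by_contra hcon
        push_neg at hcon
        obtain ⟨c, hcCp, hcs⟩ := hcp s
        have hcle : μ s ≤ c s := hcs ▸ hcon
        have hηlt : ηe < c s - μ s := by
          by_contra hle
          push_neg at hle
          have : s ∈ {s : S | ∃ c ∈ Cp, 0 ≤ c s - μ s ∧ c s - μ s ≤ ηe} :=
            ⟨c, hcCp, by linarith, hle⟩
          rw [hep] at this; exact this
        have hσs : o ≤ σ s := hσo s
        have hτσ : 0 < τ N * σ s := mul_pos (hτpos N) (ho.trans_le hσs)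
        by_cases hnear : ∃ c' ∈ Cm ∪ Cp, |μ s - c' s| ≤ ηt
        · have hG := (hωT s hnear).2
          have hG' : μhat N ω s - μ s ≤ (qp s + M1) * (τ N * σ s) :=
            (div_le_iff₀ hτσ).mp hG
          have hM1b : M1 * (τ N * σ s) ≤ ηe := by
            have h1 : σ s ≤ max O 1 := (hσO s).trans (le_max_left _ _)
            have h2 : M1 * (τ N * σ s) ≤ M1 * (τ N * max O 1) := by
              have := mul_le_mul_of_nonneg_left h1 (hτpos N).le
              nlinarith
            calc M1 * (τ N * σ s) ≤ M1 * (τ N * max O 1) := h2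
              _ = τ N * A1 := by ring
              _ ≤ ηe := hτδ1
          rw [hcs] at hs
          nlinarith
        · have hfs := hfar1 ω N c (Set.mem_union_right _ hcCp) s hnear
          have hsgn : Real.sign (μ s - c s) = -1 := Real.sign_of_neg (by linarith)
          rw [hsgn] at hfs
          have hZs : -M2 * τ N ≤ Z N ω s := (le_div_iff₀ (hτpos N)).mp (hωZ s)
          have hq : -(Mqp) ≤ qp s := neg_le_of_abs_le (hMqp' s)
          rw [hcs] at hs
          have hKb : (M2 + Mqp) * τ N ≤ K := by
            nlinarith [hτδ2, (hτpos N).le, hMqmpos]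
          have hσpos : 0 < σ s := ho.trans_le hσs
          have hfs' : c s - μhat N ω s ≥ σ s * (K + Z N ω s) := by nlinarith [hfs]
          have step1 : σ s * (K - M2 * τ N) ≤ σ s * (K + Z N ω s) := by nlinarith
          have step2 : σ s * (K - M2 * τ N) ≤ c s - μhat N ω s := le_trans step1 hfs'
          have step3 : c s - μhat N ω s < σ s * (Mqp * τ N) := by nlinarith [mul_pos (hτpos N) hσpos]
          have step4 : K - M2 * τ N < Mqp * τ N := (mul_lt_mul_iff_right₀ hσpos).mp (lt_of_le_of_lt step2 step3)
          linarith
    -- probabilistic part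
    have hbd1 : IsBoundedUnder (· ≥ ·) atTop (fun N => innerProb P (T N)) :=
      isBoundedUnder_of ⟨0, fun N => innerProb_nonneg' P _⟩
    have hbd2 : IsBoundedUnder (· ≥ ·) atTop (fun N => innerProb P (ZE N)) :=
      isBoundedUnder_of ⟨0, fun N => innerProb_nonneg' P _⟩
    have hev2 : ∀ᶠ N in atTop, 1 - ε/2 < innerProb P (T N) :=
      eventually_lt_of_lt_liminf (lt_of_lt_of_le (by linarith) hliminf1) hbd1
    have hev3 : ∀ᶠ N in atTop, 1 - ε/2 < innerProb P (ZE N) :=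
      eventually_lt_of_lt_liminf (lt_of_lt_of_le (by linarith) hliminf2) hbd2
    filter_upwards [hev1, hev2, hev3] with N h1 h2 h3
    have hsub := hincl N h1
    have := innerProb_inter' P (T N) (ZE N)
    have hmono := innerProb_mono' P hsub
    linarith
  -- conclude the limit
  rw [Metric.tendsto_atTop]
  intro ε hε
  obtain ⟨N0, hN0⟩ := eventually_atTop.mp (claim (ε/2) (by linarith))
  refine ⟨N0, fun n hn => ?_⟩
  have h1 := hN0 n hn
  have h2 := innerProb_le_one' P (E n)
  rw [Real.dist_eq]
  have habs : |innerProb P (E n) - 1| ≤ ε/2 := abs_le.mpr ⟨by linarith, by linarith⟩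
  linarith
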